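/- Any two minimal extension sheaves $\mathcal{E}$ and $\mathcal{E}'$ on the same fan $\Delta$ are isomorphic as sheaves of graded $\mathcal{A}$-modules. -/

import Mathlib

open MvPolynomial

/-- The convex polyhedral cone generated by finitely many vectors. -/
def IsPCone {n : ℕ} (σ : Set (Fin n → ℚ)) : Prop :=
  ∃ (m : ℕ) (v : Fin m → Fin n → ℚ),
    σ = {x | ∃ c : Fin m → ℚ, (∀ i, 0 ≤ c i) ∧ x = ∑ i, c i • v i}

/-- `τ` is a face of the cone `σ`, cut out by a supporting linear form. -/
def IsFaceOf {n : ℕ} (τ σ : Set (Fin n → ℚ)) : Prop :=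
  ∃ ℓ : (Fin n → ℚ) →ₗ[ℚ] ℚ, (∀ x ∈ σ, 0 ≤ ℓ x) ∧ τ = {x ∈ σ | ℓ x = 0}

/-- A fan: a finite collection of polyhedral cones, closed under taking faces,
such that any two cones intersect in a common face. -/
structure IsFan {n : ℕ} (Δ : Set (Set (Fin n → ℚ))) : Prop where
  finite : Δ.Finite
  pcone : ∀ σ ∈ Δ, IsPCone σ
  face_mem : ∀ σ ∈ Δ, ∀ τ, IsFaceOf τ σ → τ ∈ Δ
  inter_face : ∀ σ ∈ Δ, ∀ σ' ∈ Δ, IsFaceOf (σ ∩ σ') σ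

/-- A subfan: a subset of the fan closed under taking faces. -/
def IsSubfan {n : ℕ} (Λ Δ : Set (Set (Fin n → ℚ))) : Prop :=
  Λ ⊆ Δ ∧ ∀ σ ∈ Λ, ∀ τ, IsFaceOf τ σ → τ ∈ Λ

/-- The support of a fan. -/
def supp {n : ℕ} (Δ : Set (Set (Fin n → ℚ))) : Set (Fin n → ℚ) := ⋃ σ ∈ Δ, σ

/-- `f` is a `Δ`-piecewise polynomial function: on each cone of `Δ` it agrees
with a polynomial. -/
def PP {n : ℕ} (Δ : Set (Set (Fin n → ℚ))) (f : (Fin n → ℚ) → ℚ) : Prop :=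
  ∀ σ ∈ Δ, ∃ p : MvPolynomial (Fin n) ℚ, ∀ x ∈ σ, f x = eval x p

/-- A simplicial fan: each cone is generated by linearly independent vectors. -/
def IsSimplicial {n : ℕ} (Δ : Set (Set (Fin n → ℚ))) : Prop :=
  ∀ σ ∈ Δ, ∃ (m : ℕ) (v : Fin m → Fin n → ℚ), LinearIndependent ℚ v ∧
    σ = {x | ∃ c : Fin m → ℚ, (∀ i, 0 ≤ c i) ∧ x = ∑ i, c i • v i}

/-- The graded polynomial ring `A = ℚ[u₁,…,uₙ]` (linear forms in degree 2). -/
abbrev Aring (n : ℕ) := MvPolynomial (Fin n) ℚ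

/-- The homogeneous maximal ideal `𝔪 = A^{>0}`. -/
noncomputable def mIdeal (n : ℕ) : Ideal (Aring n) :=
  Ideal.span (Set.range MvPolynomial.X)

/-- The ideal of polynomial functions vanishing on the linear span `V_σ` of a
cone `σ`; the quotient `A/coneIdeal σ` is the ring `A_σ = S(V_σ^*)`. -/
noncomputable def coneIdeal {n : ℕ} (σ : Set (Fin n → ℚ)) : Ideal (Aring n) where
  carrier := {p | ∀ x ∈ Submodule.span ℚ σ, eval x p = 0}
  zero_mem' := by intro x _; simp
  add_mem' := by
    intro a b ha hb x hx
    simp [map_add, ha x hx, hb x hx]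
  smul_mem' := by
    intro c p hp x hx
    simp [smul_eq_mul, hp x hx]

/-- A sheaf of graded `𝒜`-modules on the fan space `Δ`, given by its stalks
`E σ` (the sections over the affine subfan `⟨σ⟩`) together with compatible
degree-preserving restriction maps; the grading is such that the action of a
homogeneous polynomial of degree `i` raises degrees by `2i`. -/
structure GSheaf (n : ℕ) (Δ : Set (Set (Fin n → ℚ))) where
  E : Set (Fin n → ℚ) → Type
  [acg : ∀ σ, AddCommGroup (E σ)]
  [modA : ∀ σ, Module (Aring n) (E σ)]
  [modQ : ∀ σ, Module ℚ (E σ)]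
  [tower : ∀ σ, IsScalarTower ℚ (Aring n) (E σ)]
  res : ∀ σ τ : Set (Fin n → ℚ), τ ⊆ σ → E σ →ₗ[Aring n] E τ
  res_self : ∀ σ (h : σ ⊆ σ), res σ σ h = LinearMap.id
  res_comp : ∀ σ τ υ (h1 : τ ⊆ σ) (h2 : υ ⊆ τ),
    (res τ υ h2).comp (res σ τ h1) = res σ υ (h2.trans h1)
  deg : ∀ σ, ℕ → Submodule ℚ (E σ)
  [decomp : ∀ σ, DirectSum.Decomposition (deg σ)]
  deg_smul : ∀ σ (i j : ℕ), ∀ p ∈ homogeneousSubmodule (Fin n) ℚ i, ∀ x ∈ deg σ j,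
    p • x ∈ deg σ (2 * i + j)
  res_deg : ∀ σ τ (h : τ ⊆ σ) (j : ℕ), ∀ x ∈ deg σ j, res σ τ h x ∈ deg τ j

attribute [instance] GSheaf.acg GSheaf.modA GSheaf.modQ GSheaf.tower GSheaf.decomp

variable {n : ℕ} {Δ : Set (Set (Fin n → ℚ))}

/-- The module of sections of the sheaf over a collection `Λ` of cones:
compatible families of stalk elements. -/
def GSheaf.Sect (S : GSheaf n Δ) (Λ : Set (Set (Fin n → ℚ))) :
    Submodule (Aring n) (∀ σ : Λ, S.E σ) where
  carrier := {x | ∀ (σ τ : Λ) (h : (τ : Set (Fin n → ℚ)) ⊆ σ), S.res σ τ h (x σ) = x τ}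
  zero_mem' := by intro σ τ h; simp
  add_mem' := by intro a b ha hb σ τ h; simp [ha σ τ h, hb σ τ h]
  smul_mem' := by intro c a ha σ τ h; simp [ha σ τ h]

/-- Restriction of sections to a smaller collection of cones. -/
def GSheaf.resSect (S : GSheaf n Δ) (Λ₁ Λ₂ : Set (Set (Fin n → ℚ))) (h : Λ₂ ⊆ Λ₁) :
    S.Sect Λ₁ →ₗ[Aring n] S.Sect Λ₂ where
  toFun x := ⟨fun σ => x.1 ⟨σ.1, h σ.2⟩,
    fun σ τ hh => x.2 ⟨σ.1, h σ.2⟩ ⟨τ.1, h τ.2⟩ hh⟩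
  map_add' x y := rfl
  map_smul' c x := rfl

/-- The boundary subfan `∂σ` of a cone `σ` in the fan `Δ`. -/
def bdry {n : ℕ} (Δ : Set (Set (Fin n → ℚ))) (σ : Set (Fin n → ℚ)) :
    Set (Set (Fin n → ℚ)) :=
  {τ | τ ∈ Δ ∧ τ ⊆ σ ∧ τ ≠ σ}

/-- The restriction map from the stalk at `σ` to the sections over `∂σ`. -/
noncomputable def GSheaf.toBoundary (S : GSheaf n Δ) (σ : Set (Fin n → ℚ)) :
    S.E σ →ₗ[Aring n] S.Sect (bdry Δ σ) where
  toFun x := ⟨fun τ => S.res σ τ τ.2.2.1 x, fun τ υ h => by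
    have := DFunLike.congr_fun (S.res_comp σ τ υ τ.2.2.1 h) x
    exact this⟩
  map_add' x y := Subtype.ext (funext fun τ => map_add _ x y)
  map_smul' c x := Subtype.ext (funext fun τ => map_smul _ c x)

/-- `S` is a minimal extension sheaf: it satisfies the normalization (N),
pointwise freeness (PF) and local minimal extension (LME) conditions. -/
def GSheaf.IsMES (S : GSheaf n Δ) : Prop :=
  -- (N) : `E(o) ≅ ℚ`, concentrated in degree 0
  (Nonempty (S.E ({0} : Set (Fin n → ℚ)) ≃ₗ[ℚ] ℚ) ∧
    S.deg ({0} : Set (Fin n → ℚ)) 0 = ⊤) ∧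
  -- (PF) : each `E(σ)` is a finitely generated free `A_σ = A/coneIdeal σ`-module
  (∀ σ ∈ Δ, (∀ p ∈ coneIdeal σ, ∀ x : S.E σ, p • x = 0) ∧
    ∃ (k : ℕ) (b : Fin k → S.E σ),
      Submodule.span (Aring n) (Set.range b) = ⊤ ∧
      ∀ c : Fin k → Aring n, ∑ i, c i • b i = 0 → ∀ i, c i ∈ coneIdeal σ) ∧
  -- (LME) : `E(σ) → E(∂σ)` becomes an isomorphism modulo `𝔪`
  (∀ σ ∈ Δ, σ ≠ ({0} : Set (Fin n → ℚ)) →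
    (∀ y : S.Sect (bdry Δ σ), ∃ x : S.E σ,
      y - S.toBoundary σ x ∈
        mIdeal n • (⊤ : Submodule (Aring n) (S.Sect (bdry Δ σ)))) ∧
    (∀ x : S.E σ,
      S.toBoundary σ x ∈ mIdeal n • (⊤ : Submodule (Aring n) (S.Sect (bdry Δ σ))) →
      x ∈ mIdeal n • (⊤ : Submodule (Aring n) (S.E σ))))


/-! ### Auxiliary material for the proof -/

section Aux

open MvPolynomial Finset

theorem mem_mIdeal_iff {p : Aring n} : p ∈ mIdeal n ↔ constantCoeff p = 0 := by
  constructor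
  · intro hp
    have hle : mIdeal n ≤ RingHom.ker (constantCoeff (σ := Fin n) (R := ℚ)) := by
      rw [mIdeal, Ideal.span_le]
      rintro q ⟨i, rfl⟩
      simp [RingHom.mem_ker]
    simpa [RingHom.mem_ker] using hle hp
  · intro hp
    have key : ∀ q : Aring n, q - C (constantCoeff q) ∈ mIdeal n := by
      intro q
      induction q using MvPolynomial.induction_on with
      | C a => simp [Ideal.zero_mem]
      | add p q hp hq =>
          have := Ideal.add_mem _ hp hq
          simpa [sub_add_sub_comm] using this
      | mul_X p i hp =>
          have h1 : (p * X i : Aring n) ∈ mIdeal n :=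
            Ideal.mul_mem_left _ p (Ideal.subset_span ⟨i, rfl⟩)
          simpa using h1
    have := key p
    rw [hp] at this
    simpa using this

theorem eval_zero_apply (p : Aring n) : eval (0 : Fin n → ℚ) p = constantCoeff p :=
  DFunLike.congr_fun (MvPolynomial.eval_zero) p

theorem coneIdeal_le_mIdeal (σ : Set (Fin n → ℚ)) : coneIdeal σ ≤ mIdeal n := by
  intro p hp
  rw [mem_mIdeal_iff]
  have h0 : (0 : Fin n → ℚ) ∈ Submodule.span ℚ σ := Submodule.zero_mem _
  have := hp 0 h0
  rwa [eval_zero_apply] at this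

theorem mem_coneIdeal_zero_iff {p : Aring n} :
    p ∈ coneIdeal ({0} : Set (Fin n → ℚ)) ↔ constantCoeff p = 0 := by
  constructor
  · intro hp
    have := hp 0 (Submodule.zero_mem _)
    rwa [eval_zero_apply] at this
  · intro hp x hx
    have hx0 : x = 0 := by
      simpa [Submodule.span_zero_singleton, Submodule.mem_bot] using hx
    rw [hx0, eval_zero_apply, hp]

/-- Bundled data of an `ℕ`-graded structure on a `ℚ`- and `Aring n`-module,
with projections onto the graded pieces. -/
structure GMod (n : ℕ) (M : Type) [AddCommGroup M] [Module (Aring n) M] [Module ℚ M] where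
  deg : ℕ → Submodule ℚ M
  pr : ℕ → M →+ M
  pr_mem : ∀ j x, pr j x ∈ deg j
  pr_of_mem : ∀ {j : ℕ} {x : M}, x ∈ deg j → pr j x = x
  pr_of_ne : ∀ {j j' : ℕ} {x : M}, x ∈ deg j' → j ≠ j' → pr j x = 0
  sum_pr : ∀ x : M, ∃ s : Finset ℕ, x = ∑ j ∈ s, pr j x
  smul_mem : ∀ (i j : ℕ) (p : Aring n), p ∈ homogeneousSubmodule (Fin n) ℚ i →
    ∀ x ∈ deg j, p • x ∈ deg (2 * i + j)

namespace GMod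

variable {M : Type} [AddCommGroup M] [Module (Aring n) M] [Module ℚ M] (D : GMod n M)

theorem pr_smul_homog (a : Aring n) {y : M} {dy : ℕ} (hy : y ∈ D.deg dy) (j : ℕ) :
    D.pr j (a • y) = ∑ d ∈ Finset.range (a.totalDegree + 1),
      if j = 2 * d + dy then (homogeneousComponent d a) • y else 0 := by
  have h1 : a • y = ∑ d ∈ Finset.range (a.totalDegree + 1), homogeneousComponent d a • y := by
    rw [← Finset.sum_smul, MvPolynomial.sum_homogeneousComponent]
  rw [h1, map_sum]
  refine Finset.sum_congr rfl fun d _ => ?_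
  have hmem : (homogeneousComponent d a) • y ∈ D.deg (2 * d + dy) :=
    D.smul_mem d dy _ ((mem_homogeneousSubmodule _ _).2
      (homogeneousComponent_isHomogeneous d a)) y hy
  by_cases h : j = 2 * d + dy
  · subst h
    rw [if_pos rfl, D.pr_of_mem hmem]
  · rw [if_neg h]
    exact D.pr_of_ne hmem h

theorem pr_pr (j j' : ℕ) (x : M) : D.pr j (D.pr j' x) = if j = j' then D.pr j' x else 0 := by
  by_cases h : j = j'
  · subst h
    rw [if_pos rfl, D.pr_of_mem (D.pr_mem j x)]
  · rw [if_neg h]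
    exact D.pr_of_ne (D.pr_mem j' x) h

theorem pr_eq_zero_of_not_mem {x : M} {s : Finset ℕ} (hx : x = ∑ j ∈ s, D.pr j x)
    {j : ℕ} (hj : j ∉ s) : D.pr j x = 0 := by
  conv_lhs => rw [hx]
  rw [map_sum]
  refine Finset.sum_eq_zero fun j' hj' => ?_
  rw [D.pr_pr, if_neg (by rintro rfl; exact hj hj')]

theorem pr_span_mem (s : Set M) (hs : ∀ z ∈ s, ∃ j, z ∈ D.deg j) :
    ∀ x ∈ Submodule.span (Aring n) s, ∀ j, D.pr j x ∈ Submodule.span (Aring n) s := by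
  intro x hx
  induction hx using Submodule.span_induction with
  | mem z hz =>
      intro j
      obtain ⟨j₀, hj₀⟩ := hs z hz
      by_cases h : j = j₀
      · subst h
        rw [D.pr_of_mem hj₀]
        exact Submodule.subset_span hz
      · rw [D.pr_of_ne hj₀ h]
        exact Submodule.zero_mem _
  | zero => intro j; simp
  | add x y _ _ hx hy =>
      intro j
      rw [map_add]
      exact add_mem (hx j) (hy j)
  | smul a x _ hx =>
      intro j
      obtain ⟨t, hxt⟩ := D.sum_pr x
      have h2 : a • x = ∑ j' ∈ t, a • D.pr j' x := by
        conv_lhs => rw [hxt]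
        rw [Finset.smul_sum]
      rw [h2, map_sum]
      refine Submodule.sum_mem _ fun j' _ => ?_
      rw [D.pr_smul_homog _ (D.pr_mem j' x)]
      refine Submodule.sum_mem _ fun d _ => ?_
      split_ifs
      · exact Submodule.smul_mem _ _ (hx j')
      · exact Submodule.zero_mem _

/-- Graded Nakayama: a submodule generated by homogeneous elements which spans
modulo `𝔪` is everything. -/
theorem span_eq_top_of_sup (s : Set M) (hs : ∀ z ∈ s, ∃ j, z ∈ D.deg j)
    (h : ∀ x : M, x ∈ Submodule.span (Aring n) s ⊔ (mIdeal n • (⊤ : Submodule (Aring n) M))) :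
    Submodule.span (Aring n) s = ⊤ := by
  set N := Submodule.span (Aring n) s with hN
  have key : ∀ j : ℕ, ∀ x ∈ D.deg j, x ∈ N := by
    intro j
    induction j using Nat.strong_induction_on with
    | _ j IH =>
    intro x hx
    obtain ⟨y, hy, t, ht, hxyt⟩ := Submodule.mem_sup.1 (h x)
    have hprt : D.pr j t ∈ N := by
      refine Submodule.smul_induction_on ht (fun r hr m _ => ?_)
        (fun u v hu hv => by rw [map_add]; exact add_mem hu hv)
      obtain ⟨tm, htm⟩ := D.sum_pr m
      have hrm : r • m = ∑ j' ∈ tm, r • D.pr j' m := by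
        conv_lhs => rw [htm]
        rw [Finset.smul_sum]
      rw [hrm, map_sum]
      refine Submodule.sum_mem _ fun j' _ => ?_
      rw [D.pr_smul_homog _ (D.pr_mem j' m)]
      refine Submodule.sum_mem _ fun d _ => ?_
      split_ifs with hjd
      · rcases Nat.eq_zero_or_pos d with hd | hd
        · subst hd
          rw [homogeneousComponent_zero]
          have hc : constantCoeff r = 0 := mem_mIdeal_iff.1 hr
          rw [show (coeff 0 r : ℚ) = constantCoeff r from rfl, hc]
          simp
        · have hj' : j' < j := by omega
          exact Submodule.smul_mem _ _ (IH j' hj' _ (D.pr_mem j' m))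
      · exact N.zero_mem
    have hx1 : D.pr j x = D.pr j y + D.pr j t := by rw [← hxyt, map_add]
    have hx2 : x = D.pr j y + D.pr j t := by rw [← hx1, D.pr_of_mem hx]
    rw [hx2]
    exact add_mem (D.pr_span_mem s hs y hy j) hprt
  rw [eq_top_iff]
  intro x _
  obtain ⟨t, hxt⟩ := D.sum_pr x
  rw [hxt]
  exact Submodule.sum_mem _ fun j _ => key j _ (D.pr_mem j x)

theorem pr_comm {M' : Type} [AddCommGroup M'] [Module (Aring n) M'] [Module ℚ M']
    (D' : GMod n M') (f : M →+ M') (hf : ∀ j, ∀ x ∈ D.deg j, f x ∈ D'.deg j)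
    (j : ℕ) (x : M) : f (D.pr j x) = D'.pr j (f x) := by
  obtain ⟨s, hx⟩ := D.sum_pr x
  have h1 : D'.pr j (f x) = ∑ j' ∈ s, if j = j' then f (D.pr j' x) else 0 := by
    conv_lhs => rw [hx]
    rw [map_sum, map_sum]
    refine Finset.sum_congr rfl fun j' _ => ?_
    have hm := hf j' _ (D.pr_mem j' x)
    by_cases h : j = j'
    · subst h
      rw [if_pos rfl, D'.pr_of_mem hm]
    · rw [if_neg h]
      exact D'.pr_of_ne hm h
  rw [h1, Finset.sum_ite_eq]
  by_cases hjs : j ∈ s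
  · rw [if_pos hjs]
  · rw [if_neg hjs, D.pr_eq_zero_of_not_mem hx hjs, map_zero]

theorem symm_graded {M' : Type} [AddCommGroup M'] [Module (Aring n) M'] [Module ℚ M']
    (D' : GMod n M') (f : M ≃ₗ[Aring n] M')
    (hf : ∀ j, ∀ x ∈ D.deg j, f x ∈ D'.deg j) :
    ∀ j, ∀ x ∈ D'.deg j, f.symm x ∈ D.deg j := by
  intro j x hx
  have h1 : f (D.pr j (f.symm x)) = D'.pr j (f (f.symm x)) :=
    D.pr_comm D' f.toLinearMap.toAddMonoidHom hf j (f.symm x)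
  rw [f.apply_symm_apply, D'.pr_of_mem hx] at h1
  have h2 : D.pr j (f.symm x) = f.symm x := by
    apply f.injective
    rw [h1, f.apply_symm_apply]
  rw [← h2]
  exact D.pr_mem _ _

end GMod

end Aux


section Aux2

open MvPolynomial

theorem GMod.sum_pr_superset {M : Type} [AddCommGroup M] [Module (Aring n) M] [Module ℚ M]
    (D : GMod n M) {x : M} {s : Finset ℕ} (hx : x = ∑ j ∈ s, D.pr j x)
    {t : Finset ℕ} (hst : s ⊆ t) : x = ∑ j ∈ t, D.pr j x := by
  have h0 : ∀ j ∈ t, j ∉ s → D.pr j x = 0 := fun j _ hj => D.pr_eq_zero_of_not_mem hx hj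
  calc x = ∑ j ∈ s, D.pr j x := hx
    _ = ∑ j ∈ t, D.pr j x := Finset.sum_subset hst h0

/-- The graded-module data on a stalk coming from the decomposition. -/
noncomputable def GSheaf.gmod (S : GSheaf n Δ) (σ : Set (Fin n → ℚ)) : GMod n (S.E σ) where
  deg := S.deg σ
  pr j :=
    { toFun := fun x => (DirectSum.decompose (S.deg σ) x j : S.E σ)
      map_zero' := by simp
      map_add' := by intro x y; simp [DirectSum.decompose_add] }
  pr_mem j x := SetLike.coe_mem _
  pr_of_mem {j x} hx := DirectSum.decompose_of_mem_same _ hx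
  pr_of_ne {j j' x} hx hne := DirectSum.decompose_of_mem_ne _ hx (Ne.symm hne)
  sum_pr x := by
    letI : ∀ (i : ℕ) (y : S.deg σ i), Decidable (y ≠ 0) := fun _ _ => Classical.propDecidable _
    exact ⟨(DirectSum.decompose (S.deg σ) x).support,
      (DirectSum.sum_support_decompose (S.deg σ) x).symm⟩
  smul_mem i j p hp x hx := S.deg_smul σ i j p hp x hx

theorem GSheaf.res_pr_comm (S : GSheaf n Δ) (σ τ : Set (Fin n → ℚ)) (h : τ ⊆ σ) (j : ℕ)
    (x : S.E σ) :
    S.res σ τ h ((S.gmod σ).pr j x) = (S.gmod τ).pr j (S.res σ τ h x) :=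
  (S.gmod σ).pr_comm (S.gmod τ) (S.res σ τ h).toAddMonoidHom (S.res_deg σ τ h) j x

/-- The graded-module data on the module of sections over a finite collection. -/
noncomputable def GSheaf.gmodSect (S : GSheaf n Δ) (Λ : Set (Set (Fin n → ℚ)))
    (hΛ : Λ.Finite) : GMod n (S.Sect Λ) where
  deg j :=
    { carrier := {x : S.Sect Λ | ∀ τ : Λ, (x : ∀ σ : Λ, S.E σ) τ ∈ S.deg τ j}
      zero_mem' := by intro τ; exact (S.deg τ j).zero_mem
      add_mem' := by
        intro a b ha hb τ
        exact (S.deg τ j).add_mem (ha τ) (hb τ)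
      smul_mem' := by
        intro q a ha τ
        exact (S.deg τ j).smul_mem q (ha τ) }
  pr j :=
    { toFun := fun x => ⟨fun τ => (S.gmod τ).pr j ((x : ∀ σ : Λ, S.E σ) τ), by
        intro τ υ hh
        rw [S.res_pr_comm, x.2 τ υ hh]⟩
      map_zero' := by
        apply Subtype.ext; funext τ; simp
      map_add' := by
        intro x y
        apply Subtype.ext; funext τ; simp }
  pr_mem j x τ := (S.gmod τ).pr_mem j _
  pr_of_mem {j x} hx := Subtype.ext (funext fun τ => (S.gmod τ).pr_of_mem (hx τ))
  pr_of_ne {j j' x} hx hne := Subtype.ext (funext fun τ => (S.gmod τ).pr_of_ne (hx τ) hne)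
  sum_pr x := by
    classical
    haveI := hΛ.fintype
    refine ⟨Finset.univ.biUnion
      (fun τ : Λ => Classical.choose ((S.gmod τ).sum_pr ((x : ∀ σ : Λ, S.E σ) τ))), ?_⟩
    apply Subtype.ext
    rw [AddSubmonoidClass.coe_finset_sum]
    funext τ
    rw [Finset.sum_apply]
    exact (S.gmod τ).sum_pr_superset
      (Classical.choose_spec ((S.gmod τ).sum_pr ((x : ∀ σ : Λ, S.E σ) τ)))
      (Finset.subset_biUnion_of_mem (u := fun τ : Λ => Classical.choose ((S.gmod τ).sum_pr ((x : ∀ σ : Λ, S.E σ) τ))) (Finset.mem_univ τ))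
  smul_mem i j p hp x hx τ := S.deg_smul τ i j p hp _ (hx τ)

end Aux2


section Aux3

open MvPolynomial

theorem smul_eq_constantCoeff_smul {M : Type} [AddCommGroup M] [Module (Aring n) M]
    [Module ℚ M] [IsScalarTower ℚ (Aring n) M]
    (htor : ∀ p ∈ coneIdeal ({0} : Set (Fin n → ℚ)), ∀ x : M, p • x = 0)
    (p : Aring n) (x : M) : p • x = (constantCoeff p : ℚ) • x := by
  have h1 : (p - C (constantCoeff p)) • x = 0 := by
    refine htor _ ?_ x
    rw [mem_coneIdeal_zero_iff]
    simp
  have h2 : p • x = (C (constantCoeff p) : Aring n) • x := by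
    have h3 := sub_smul p (C (constantCoeff p)) x
    rw [h1] at h3
    exact (sub_eq_zero.1 h3.symm)
  rw [h2, ← MvPolynomial.algebraMap_eq]
  exact algebraMap_smul _ _ _

/-- Construct a linear map out of a module with a distinguished "basis modulo
the cone ideal". -/
theorem exists_lift (σ : Set (Fin n → ℚ)) {M M' : Type}
    [AddCommGroup M] [Module (Aring n) M] [AddCommGroup M'] [Module (Aring n) M']
    (htM : ∀ p ∈ coneIdeal σ, ∀ x : M, p • x = 0)
    (htM' : ∀ p ∈ coneIdeal σ, ∀ x : M', p • x = 0)
    {k : ℕ} {c : Fin k → M} (hspan : Submodule.span (Aring n) (Set.range c) = ⊤)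
    (hrel : ∀ a : Fin k → Aring n, ∑ i, a i • c i = 0 → ∀ i, a i ∈ coneIdeal σ)
    (x : Fin k → M') : ∃ f : M →ₗ[Aring n] M', ∀ i, f (c i) = x i := by
  classical
  letI torM : Module.IsTorsionBySet (Aring n) M (coneIdeal σ : Set (Aring n)) :=
    fun y a => htM a.1 a.2 y
  letI torM' : Module.IsTorsionBySet (Aring n) M' (coneIdeal σ : Set (Aring n)) :=
    fun y a => htM' a.1 a.2 y
  letI := torM.module
  letI := torM'.module
  letI : IsScalarTower (Aring n) (Aring n ⧸ coneIdeal σ) M := torM.isScalarTower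
  haveI : SMulCommClass (Aring n ⧸ coneIdeal σ) (Aring n ⧸ coneIdeal σ) M' :=
    ⟨fun a b y => by rw [← mul_smul, mul_comm, mul_smul]⟩
  have hsur : Function.Surjective (algebraMap (Aring n) (Aring n ⧸ coneIdeal σ)) := by
    rw [Ideal.Quotient.algebraMap_eq]
    exact Ideal.Quotient.mk_surjective
  have hspanσ : Submodule.span (Aring n ⧸ coneIdeal σ) (Set.range c) = ⊤ := by
    have h1 := Submodule.restrictScalars_span (Aring n) (Aring n ⧸ coneIdeal σ) hsur (Set.range c)
    rw [hspan] at h1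
    rw [eq_top_iff]
    intro y _
    have hy : y ∈ Submodule.restrictScalars (Aring n)
        (Submodule.span (Aring n ⧸ coneIdeal σ) (Set.range c)) := by rw [h1]; trivial
    exact hy
  have hlin : LinearIndependent (Aring n ⧸ coneIdeal σ) c := by
    rw [Fintype.linearIndependent_iff]
    intro g hg
    choose a ha using fun i => Ideal.Quotient.mk_surjective (g i)
    have h2 : ∑ i, a i • c i = 0 := by
      rw [← hg]
      refine Finset.sum_congr rfl fun i _ => ?_
      rw [← ha i]
      rfl
    intro i
    rw [← ha i, Ideal.Quotient.eq_zero_iff_mem]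
    exact hrel a h2 i
  let cB : Module.Basis (Fin k) (Aring n ⧸ coneIdeal σ) M := Module.Basis.mk hlin (by rw [hspanσ])
  let f₀ : M →ₗ[Aring n ⧸ coneIdeal σ] M' := cB.constr (Aring n ⧸ coneIdeal σ) x
  refine ⟨{ toFun := f₀, map_add' := f₀.map_add, map_smul' := fun p y => ?_ }, fun i => ?_⟩
  · show f₀ (p • y) = p • f₀ y
    have h3 : p • y = (Ideal.Quotient.mk (coneIdeal σ) p) • y := rfl
    have h4 : ∀ z : M', p • z = (Ideal.Quotient.mk (coneIdeal σ) p) • z := fun _ => rfl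
    rw [h3, f₀.map_smul, ← h4]
  · show f₀ (c i) = x i
    have h5 := cB.constr_basis (Aring n ⧸ coneIdeal σ) x i
    rwa [show cB i = c i from Module.Basis.mk_apply hlin _ i] at h5

theorem lift_graded (σ : Set (Fin n → ℚ)) {M M' : Type}
    [AddCommGroup M] [Module (Aring n) M] [Module ℚ M]
    [AddCommGroup M'] [Module (Aring n) M'] [Module ℚ M']
    (D : GMod n M) (D' : GMod n M')
    (htM' : ∀ p ∈ coneIdeal σ, ∀ x : M', p • x = 0)
    {k : ℕ} {c : Fin k → M} {d : Fin k → ℕ} (hc : ∀ i, c i ∈ D.deg (d i))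
    (hspan : Submodule.span (Aring n) (Set.range c) = ⊤)
    (hrel : ∀ a : Fin k → Aring n, ∑ i, a i • c i = 0 → ∀ i, a i ∈ coneIdeal σ)
    {x : Fin k → M'} (hx : ∀ i, x i ∈ D'.deg (d i))
    (f : M →ₗ[Aring n] M') (hf : ∀ i, f (c i) = x i) :
    ∀ j, ∀ e ∈ D.deg j, f e ∈ D'.deg j := by
  classical
  intro j e he
  obtain ⟨a, ha⟩ := (Submodule.mem_span_range_iff_exists_fun _).1
    (by rw [hspan]; trivial : e ∈ Submodule.span (Aring n) (Set.range c))
  set a' : Fin k → Aring n := fun i => ∑ d' ∈ Finset.range ((a i).totalDegree + 1),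
    if j = 2 * d' + d i then homogeneousComponent d' (a i) else 0 with ha'
  have h1 : ∀ i, D.pr j (a i • c i) = a' i • c i := by
    intro i
    rw [D.pr_smul_homog _ (hc i), ha']
    simp only [Finset.sum_smul]
    refine Finset.sum_congr rfl fun d' _ => ?_
    split_ifs <;> simp
  have hsum : ∑ i, a' i • c i = e := by
    calc ∑ i, a' i • c i = ∑ i, D.pr j (a i • c i) := by
          exact Finset.sum_congr rfl fun i _ => (h1 i).symm
      _ = D.pr j (∑ i, a i • c i) := (map_sum (D.pr j) _ _).symm
      _ = D.pr j e := by rw [ha]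
      _ = e := D.pr_of_mem he
  have hdiff : ∀ i, (a i - a' i) ∈ coneIdeal σ := by
    refine hrel (fun i => a i - a' i) ?_
    simp only [sub_smul, Finset.sum_sub_distrib]
    rw [ha, hsum, sub_self]
  have hfe : f e = ∑ i, a' i • x i := by
    have h2 : f e = ∑ i, a i • x i := by
      rw [← ha, map_sum]
      exact Finset.sum_congr rfl fun i _ => by rw [map_smul, hf]
    rw [h2]
    refine Finset.sum_congr rfl fun i _ => ?_
    have h3 : (a i - a' i) • x i = 0 := htM' _ (hdiff i) _
    rw [sub_smul] at h3
    have := sub_eq_zero.1 h3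
    exact this
  rw [hfe]
  refine Submodule.sum_mem _ fun i _ => ?_
  rw [ha']
  simp only [Finset.sum_smul]
  refine Submodule.sum_mem _ fun d' _ => ?_
  split_ifs with h
  · rw [h]
    exact D'.smul_mem d' (d i) _ ((mem_homogeneousSubmodule _ _).2
      (homogeneousComponent_isHomogeneous d' (a i))) _ (hx i)
  · simp

end Aux3


section Aux4

open MvPolynomial

theorem C_smul_eq {M : Type} [AddCommGroup M] [Module (Aring n) M] [Module ℚ M]
    [IsScalarTower ℚ (Aring n) M] (q : ℚ) (y : M) : (C q : Aring n) • y = q • y := by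
  rw [← MvPolynomial.algebraMap_eq]
  exact algebraMap_smul _ _ _

/-- Every stalk of a minimal extension sheaf admits a homogeneous basis
(modulo the cone ideal). -/
theorem GSheaf.exists_homog_basis (S : GSheaf n Δ) (hS : S.IsMES)
    (σ : Set (Fin n → ℚ)) (hσ : σ ∈ Δ) :
    ∃ (k : ℕ) (c : Fin k → S.E σ) (d : Fin k → ℕ),
      (∀ i, c i ∈ S.deg σ (d i)) ∧
      Submodule.span (Aring n) (Set.range c) = ⊤ ∧
      (∀ a : Fin k → Aring n, ∑ i, a i • c i = 0 → ∀ i, a i ∈ coneIdeal σ) := by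
  classical
  obtain ⟨htor, k, b, hbspan, hbrel⟩ := hS.2.1 σ hσ
  set mE : Submodule (Aring n) (S.E σ) := mIdeal n • (⊤ : Submodule (Aring n) (S.E σ)) with hmE
  set mk : S.E σ →ₗ[Aring n] (S.E σ ⧸ mE) := mE.mkQ with hmk
  -- representation of elements of mE in terms of b with coefficients in 𝔪
  have hrep : ∀ t ∈ mE, ∃ a : Fin k → Aring n, (∀ i, a i ∈ mIdeal n) ∧ t = ∑ i, a i • b i := by
    intro t ht
    refine Submodule.smul_induction_on ht ?_ ?_
    · intro r hr y _
      obtain ⟨g, hg⟩ := (Submodule.mem_span_range_iff_exists_fun _).1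
        (by rw [hbspan]; trivial : y ∈ Submodule.span (Aring n) (Set.range b))
      refine ⟨fun i => r * g i, fun i => Ideal.mul_mem_right _ _ hr, ?_⟩
      rw [← hg, Finset.smul_sum]
      exact Finset.sum_congr rfl fun i _ => by rw [mul_smul]
    · rintro u v ⟨au, hau, rfl⟩ ⟨av, hav, rfl⟩
      exact ⟨au + av, fun i => Ideal.add_mem _ (hau i) (hav i), by
        simp [add_smul, Finset.sum_add_distrib]⟩
  -- the images of b form a ℚ-basis of E/mE
  have hmkCsmul : ∀ (q : ℚ) (y : S.E σ), mk ((C q : Aring n) • y) = q • mk y := by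
    intro q y
    rw [C_smul_eq]
    exact Submodule.Quotient.mk_smul mE q y
  have hspanQ : ∀ x : S.E σ, mk x ∈ Submodule.span ℚ (Set.range fun i => mk (b i)) := by
    intro x
    obtain ⟨g, hg⟩ := (Submodule.mem_span_range_iff_exists_fun _).1
      (by rw [hbspan]; trivial : x ∈ Submodule.span (Aring n) (Set.range b))
    have h1 : mk x = ∑ i, (constantCoeff (g i) : ℚ) • mk (b i) := by
      have h2 : ∀ i, mk (g i • b i) = (constantCoeff (g i) : ℚ) • mk (b i) := by
        intro i
        have h3 : (g i - C (constantCoeff (g i))) • b i ∈ mE := by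
          rw [hmE]
          exact Submodule.smul_mem_smul (by rw [mem_mIdeal_iff]; simp) trivial
        have h4 : mk ((g i - C (constantCoeff (g i))) • b i) = 0 :=
          (Submodule.Quotient.mk_eq_zero _).2 h3
        rw [sub_smul, map_sub, sub_eq_zero] at h4
        rw [h4, hmkCsmul]
      rw [← hg, map_sum]
      exact Finset.sum_congr rfl fun i _ => h2 i
    rw [h1]
    exact Submodule.sum_mem _ fun i _ =>
      Submodule.smul_mem _ _ (Submodule.subset_span ⟨i, rfl⟩)
  have hlinQ : LinearIndependent ℚ (fun i => mk (b i)) := by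
    rw [Fintype.linearIndependent_iff]
    intro g hg
    have h1 : mk (∑ i, (C (g i) : Aring n) • b i) = 0 := by
      rw [map_sum, ← hg]
      exact Finset.sum_congr rfl fun i _ => hmkCsmul (g i) (b i)
    rw [hmk, Submodule.mkQ_apply, Submodule.Quotient.mk_eq_zero] at h1
    obtain ⟨a, ha, hsum⟩ := hrep _ h1
    have h2 : ∑ i, ((C (g i) : Aring n) - a i) • b i = 0 := by
      simp [sub_smul, Finset.sum_sub_distrib, ← hsum]
    intro i
    have h3 := hbrel _ h2 i
    have h4 : (C (g i) : Aring n) - a i ∈ mIdeal n := coneIdeal_le_mIdeal σ h3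
    have h5 : (C (g i) : Aring n) ∈ mIdeal n := by
      have := Ideal.add_mem _ h4 (ha i)
      simpa using this
    have h6 := mem_mIdeal_iff.1 h5
    simpa using h6
  let Bb : Module.Basis (Fin k) ℚ (S.E σ ⧸ mE) := Module.Basis.mk hlinQ (by
    intro x _
    obtain ⟨y, rfl⟩ := mE.mkQ_surjective x
    exact hspanQ y)
  haveI : Module.Finite ℚ (S.E σ ⧸ mE) := Module.Finite.of_basis Bb
  -- homogeneous spanning set of the quotient
  set T : Set (S.E σ ⧸ mE) := mk '' {x : S.E σ | ∃ j, x ∈ S.deg σ j} with hT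
  have hTspan : Submodule.span ℚ T = ⊤ := by
    rw [eq_top_iff]
    intro x _
    obtain ⟨y, rfl⟩ := mE.mkQ_surjective x
    obtain ⟨s, hy⟩ := (S.gmod σ).sum_pr y
    have h1 : mk y = ∑ j ∈ s, mk ((S.gmod σ).pr j y) := by
      conv_lhs => rw [hy]
      rw [map_sum]
    rw [show mE.mkQ y = mk y from rfl, h1]
    exact Submodule.sum_mem _ fun j _ =>
      Submodule.subset_span ⟨_, ⟨j, (S.gmod σ).pr_mem j y⟩, rfl⟩
  obtain ⟨t, htT, htspan, htlin⟩ := exists_linearIndependent ℚ T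
  have htfin : t.Finite := htlin.setFinite
  haveI := htfin.fintype
  let Bt : Module.Basis t ℚ (S.E σ ⧸ mE) := Module.Basis.mk htlin (by
    rw [Subtype.range_coe, htspan, hTspan])
  have hcard : Fintype.card t = k := by
    have h1 := Module.finrank_eq_card_basis Bt
    have h2 := Module.finrank_eq_card_basis Bb
    rw [Fintype.card_fin] at h2
    rw [h2] at h1
    exact h1.symm
  let e : Fin k ≃ t := (Fintype.equivFinOfCardEq hcard).symm
  have hchoice : ∀ i : Fin k, ∃ x : S.E σ, (∃ j, x ∈ S.deg σ j) ∧ mk x = (e i : S.E σ ⧸ mE) :=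
    fun i => htT (e i).2
  choose c hchom hcmk using hchoice
  choose d hd using hchom
  -- span via graded Nakayama
  have hcspan : Submodule.span (Aring n) (Set.range c) = ⊤ := by
    refine (S.gmod σ).span_eq_top_of_sup (Set.range c)
      (by rintro z ⟨i, rfl⟩; exact ⟨d i, hd i⟩) ?_
    intro x
    have h1 : mk x ∈ Submodule.span ℚ (Set.range fun i => mk (c i)) := by
      have h2 : Set.range (fun i => mk (c i)) = t := by
        ext z
        constructor
        · rintro ⟨i, rfl⟩
          show mk (c i) ∈ t
          rw [hcmk i]
          exact (e i).2
        · intro hz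
          refine ⟨e.symm ⟨z, hz⟩, ?_⟩
          show mk (c (e.symm ⟨z, hz⟩)) = z
          rw [hcmk]
          simp
      rw [h2, htspan, hTspan]
      trivial
    obtain ⟨g, hg⟩ := (Submodule.mem_span_range_iff_exists_fun _).1 h1
    have h3 : mk (∑ i, (C (g i) : Aring n) • c i) = mk x := by
      rw [map_sum, ← hg]
      exact Finset.sum_congr rfl fun i _ => hmkCsmul (g i) (c i)
    have h4 : x - ∑ i, (C (g i) : Aring n) • c i ∈ mE :=
      (Submodule.Quotient.eq mE).1 h3.symm
    refine Submodule.mem_sup.2 ⟨∑ i, (C (g i) : Aring n) • c i, ?_, _, h4, by abel⟩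
    exact Submodule.sum_mem _ fun i _ =>
      Submodule.smul_mem _ _ (Submodule.subset_span ⟨i, rfl⟩)
  refine ⟨k, c, d, hd, hcspan, ?_⟩
  -- relations land in the cone ideal
  intro a hsum0
  letI torE : Module.IsTorsionBySet (Aring n) (S.E σ) (coneIdeal σ : Set (Aring n)) :=
    fun y pa => htor pa.1 pa.2 y
  letI := torE.module
  letI : IsScalarTower (Aring n) (Aring n ⧸ coneIdeal σ) (S.E σ) := torE.isScalarTower
  have hsur : Function.Surjective (algebraMap (Aring n) (Aring n ⧸ coneIdeal σ)) := by
    rw [Ideal.Quotient.algebraMap_eq]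
    exact Ideal.Quotient.mk_surjective
  have htransfer : ∀ (v : Fin k → S.E σ), Submodule.span (Aring n) (Set.range v) = ⊤ →
      Submodule.span (Aring n ⧸ coneIdeal σ) (Set.range v) = ⊤ := by
    intro v hv
    have h1 := Submodule.restrictScalars_span (Aring n) (Aring n ⧸ coneIdeal σ) hsur (Set.range v)
    rw [hv] at h1
    rw [eq_top_iff]
    intro y _
    have hy : y ∈ Submodule.restrictScalars (Aring n)
        (Submodule.span (Aring n ⧸ coneIdeal σ) (Set.range v)) := by rw [h1]; trivial
    exact hy
  have hlinbσ : LinearIndependent (Aring n ⧸ coneIdeal σ) b := by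
    rw [Fintype.linearIndependent_iff]
    intro g hg
    choose av hav using fun i => Ideal.Quotient.mk_surjective (g i)
    have h2 : ∑ i, av i • b i = 0 := by
      rw [← hg]
      refine Finset.sum_congr rfl fun i _ => ?_
      rw [← hav i]
      rfl
    intro i
    rw [← hav i, Ideal.Quotient.eq_zero_iff_mem]
    exact hbrel av h2 i
  let bB : Module.Basis (Fin k) (Aring n ⧸ coneIdeal σ) (S.E σ) :=
    Module.Basis.mk hlinbσ (by rw [htransfer b hbspan])
  haveI : Module.Finite (Aring n ⧸ coneIdeal σ) (S.E σ) := Module.Finite.of_basis bB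
  haveI : SMulCommClass (Aring n ⧸ coneIdeal σ) (Aring n ⧸ coneIdeal σ) (S.E σ) :=
    ⟨fun p q y => by rw [← mul_smul, mul_comm, mul_smul]⟩
  let u : (Fin k → (Aring n ⧸ coneIdeal σ)) →ₗ[Aring n ⧸ coneIdeal σ] S.E σ :=
    Fintype.linearCombination (Aring n ⧸ coneIdeal σ) c
  have husurj : Function.Surjective u := by
    intro y
    obtain ⟨g, hg⟩ := (Submodule.mem_span_range_iff_exists_fun _).1
      (by rw [htransfer c hcspan]; trivial :
        y ∈ Submodule.span (Aring n ⧸ coneIdeal σ) (Set.range c))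
    exact ⟨g, by rw [Fintype.linearCombination_apply]; exact hg⟩
  have hendos : Function.Surjective (u ∘ₗ bB.equivFun.toLinearMap) := by
    exact husurj.comp bB.equivFun.surjective
  have hendoi : Function.Injective (u ∘ₗ bB.equivFun.toLinearMap) :=
    OrzechProperty.injective_of_surjective_endomorphism _ hendos
  have huinj : Function.Injective u := by
    intro g g' hgg
    have h5 : (u ∘ₗ bB.equivFun.toLinearMap) (bB.equivFun.symm g)
        = (u ∘ₗ bB.equivFun.toLinearMap) (bB.equivFun.symm g') := by
      simp only [LinearMap.comp_apply, LinearEquiv.coe_coe, LinearEquiv.apply_symm_apply]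
      exact hgg
    have h6 := hendoi h5
    exact bB.equivFun.symm.injective h6
  have h7 : u (fun i => Ideal.Quotient.mk (coneIdeal σ) (a i)) = 0 := by
    rw [Fintype.linearCombination_apply, ← hsum0]
    exact Finset.sum_congr rfl fun i _ => rfl
  intro i
  have h8 : (fun i => Ideal.Quotient.mk (coneIdeal σ) (a i))
      = (0 : Fin k → Aring n ⧸ coneIdeal σ) :=
    huinj (by rw [h7, map_zero])
  have h9 : Ideal.Quotient.mk (coneIdeal σ) (a i) = 0 := congrFun h8 i
  exact (Ideal.Quotient.eq_zero_iff_mem).1 h9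

end Aux4


section Aux5

open MvPolynomial

theorem GSheaf.toBoundary_surjective (S : GSheaf n Δ) (hS : S.IsMES) (hfin : Δ.Finite)
    (σ : Set (Fin n → ℚ)) (hσ : σ ∈ Δ) (hσ0 : σ ≠ ({0} : Set (Fin n → ℚ))) :
    Function.Surjective (S.toBoundary σ) := by
  classical
  have hΛfin : (bdry Δ σ).Finite := hfin.subset fun τ hτ => hτ.1
  set D := S.gmodSect (bdry Δ σ) hΛfin with hD
  set s : Set (S.Sect (bdry Δ σ)) :=
    ⋃ j, (S.toBoundary σ) '' (S.deg σ j : Set (S.E σ)) with hs_def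
  have hs : ∀ z ∈ s, ∃ j, z ∈ D.deg j := by
    intro z hz
    rw [hs_def, Set.mem_iUnion] at hz
    obtain ⟨j, x, hx, rfl⟩ := hz
    exact ⟨j, fun τ => S.res_deg σ τ τ.2.2.1 j x hx⟩
  have hsup : ∀ y : S.Sect (bdry Δ σ),
      y ∈ Submodule.span (Aring n) s ⊔ mIdeal n • (⊤ : Submodule (Aring n) _) := by
    intro y
    obtain ⟨x, hx⟩ := (hS.2.2 σ hσ hσ0).1 y
    have h1 : S.toBoundary σ x ∈ Submodule.span (Aring n) s := by
      obtain ⟨t, hxt⟩ := (S.gmod σ).sum_pr x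
      have h2 : S.toBoundary σ x = ∑ j ∈ t, S.toBoundary σ ((S.gmod σ).pr j x) := by
        conv_lhs => rw [hxt]
        rw [map_sum]
      rw [h2]
      exact Submodule.sum_mem _ fun j _ => Submodule.subset_span
        (by rw [hs_def, Set.mem_iUnion]; exact ⟨j, _, (S.gmod σ).pr_mem j x, rfl⟩)
    exact Submodule.mem_sup.2 ⟨S.toBoundary σ x, h1, y - S.toBoundary σ x, hx, by abel⟩
  have htop := D.span_eq_top_of_sup s hs hsup
  intro y
  have h3 : y ∈ Submodule.span (Aring n) s := by rw [htop]; trivial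
  have h4 : Submodule.span (Aring n) s ≤ LinearMap.range (S.toBoundary σ) := by
    rw [Submodule.span_le]
    intro z hz
    rw [hs_def, Set.mem_iUnion] at hz
    obtain ⟨j, x, _, rfl⟩ := hz
    exact ⟨x, rfl⟩
  exact h4 h3

theorem extend_iso (S S' : GSheaf n Δ) (hS : S.IsMES) (hS' : S'.IsMES)
    (hfin : Δ.Finite) (σ : Set (Fin n → ℚ)) (hσ : σ ∈ Δ)
    (hσ0 : σ ≠ ({0} : Set (Fin n → ℚ)))
    (φ : ∀ τ, τ ∈ bdry Δ σ → (S.E τ ≃ₗ[Aring n] S'.E τ))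
    (hφres : ∀ τ (hτ : τ ∈ bdry Δ σ) υ (hυ : υ ∈ bdry Δ σ) (h : υ ⊆ τ) (x : S.E τ),
      S'.res τ υ h (φ τ hτ x) = φ υ hυ (S.res τ υ h x))
    (hφdeg : ∀ τ (hτ : τ ∈ bdry Δ σ) (j : ℕ), ∀ x ∈ S.deg τ j, φ τ hτ x ∈ S'.deg τ j) :
    ∃ ψ : S.E σ ≃ₗ[Aring n] S'.E σ,
      (∀ τ (hτ : τ ∈ bdry Δ σ) (x : S.E σ),
        S'.res σ τ hτ.2.1 (ψ x) = φ τ hτ (S.res σ τ hτ.2.1 x)) ∧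
      (∀ j, ∀ x ∈ S.deg σ j, ψ x ∈ S'.deg σ j) := by
  classical
  have hΛfin : (bdry Δ σ).Finite := hfin.subset fun τ hτ => hτ.1
  set DS := S.gmodSect (bdry Δ σ) hΛfin with hDS
  set DS' := S'.gmodSect (bdry Δ σ) hΛfin with hDS'
  have hφres' : ∀ τ (hτ : τ ∈ bdry Δ σ) υ (hυ : υ ∈ bdry Δ σ) (h : υ ⊆ τ) (x : S'.E τ),
      S.res τ υ h ((φ τ hτ).symm x) = (φ υ hυ).symm (S'.res τ υ h x) := by
    intro τ hτ υ hυ h x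
    apply (φ υ hυ).injective
    rw [LinearEquiv.apply_symm_apply, ← hφres τ hτ υ hυ h ((φ τ hτ).symm x),
      LinearEquiv.apply_symm_apply]
  -- the section-level equivalence induced by φ
  let Ψf : S.Sect (bdry Δ σ) →ₗ[Aring n] S'.Sect (bdry Δ σ) :=
    { toFun := fun x => ⟨fun τ => φ τ τ.2 ((x : ∀ τ : bdry Δ σ, S.E τ) τ), by
        intro τ υ hh
        rw [hφres τ τ.2 υ υ.2 hh, x.2 τ υ hh]⟩
      map_add' := by
        intro x y
        apply Subtype.ext
        funext τ
        simp
      map_smul' := by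
        intro p x
        apply Subtype.ext
        funext τ
        simp }
  let Ψb : S'.Sect (bdry Δ σ) →ₗ[Aring n] S.Sect (bdry Δ σ) :=
    { toFun := fun x => ⟨fun τ => (φ τ τ.2).symm ((x : ∀ τ : bdry Δ σ, S'.E τ) τ), by
        intro τ υ hh
        rw [hφres' τ τ.2 υ υ.2 hh, x.2 τ υ hh]⟩
      map_add' := by
        intro x y
        apply Subtype.ext
        funext τ
        simp
      map_smul' := by
        intro p x
        apply Subtype.ext
        funext τ
        simp }
  have hΨbf : ∀ y, Ψb (Ψf y) = y := by
    intro y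
    apply Subtype.ext
    funext τ
    show (φ τ τ.2).symm (φ τ τ.2 _) = _
    rw [LinearEquiv.symm_apply_apply]
  have hΨfb : ∀ y, Ψf (Ψb y) = y := by
    intro y
    apply Subtype.ext
    funext τ
    show (φ τ τ.2) ((φ τ τ.2).symm _) = _
    rw [LinearEquiv.apply_symm_apply]
  have hφdeg' : ∀ τ (hτ : τ ∈ bdry Δ σ) (j : ℕ), ∀ x ∈ S'.deg τ j,
      (φ τ hτ).symm x ∈ S.deg τ j := fun τ hτ =>
    (S.gmod τ).symm_graded (S'.gmod τ) (φ τ hτ) (hφdeg τ hτ)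
  have hΨfdeg : ∀ j x, x ∈ DS.deg j → Ψf x ∈ DS'.deg j := by
    intro j x hx τ
    exact hφdeg τ τ.2 j _ (hx τ)
  have hΨbdeg : ∀ j x, x ∈ DS'.deg j → Ψb x ∈ DS.deg j := by
    intro j x hx τ
    exact hφdeg' τ τ.2 j _ (hx τ)
  have htBdeg : ∀ j, ∀ x ∈ S.deg σ j, S.toBoundary σ x ∈ DS.deg j :=
    fun j x hx τ => S.res_deg σ τ τ.2.2.1 j x hx
  have htBdeg' : ∀ j, ∀ x ∈ S'.deg σ j, S'.toBoundary σ x ∈ DS'.deg j :=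
    fun j x hx τ => S'.res_deg σ τ τ.2.2.1 j x hx
  -- homogeneous bases of the two stalks
  obtain ⟨k, c, d, hc, hcspan, hcrel⟩ := S.exists_homog_basis hS σ hσ
  obtain ⟨k', c', d', hc', hcspan', hcrel'⟩ := S'.exists_homog_basis hS' σ hσ
  have htorE : ∀ p ∈ coneIdeal σ, ∀ x : S.E σ, p • x = 0 := (hS.2.1 σ hσ).1
  have htorE' : ∀ p ∈ coneIdeal σ, ∀ x : S'.E σ, p • x = 0 := (hS'.2.1 σ hσ).1
  -- lifts of the images of the basis elements
  have hxex : ∀ i : Fin k, ∃ xi : S'.E σ,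
      S'.toBoundary σ xi = Ψf (S.toBoundary σ (c i)) ∧ xi ∈ S'.deg σ (d i) := by
    intro i
    obtain ⟨z, hz⟩ := S'.toBoundary_surjective hS' hfin σ hσ hσ0 (Ψf (S.toBoundary σ (c i)))
    refine ⟨(S'.gmod σ).pr (d i) z, ?_, (S'.gmod σ).pr_mem _ _⟩
    have h5 : S'.toBoundary σ ((S'.gmod σ).pr (d i) z)
        = DS'.pr (d i) (S'.toBoundary σ z) :=
      (S'.gmod σ).pr_comm DS' (S'.toBoundary σ).toAddMonoidHom htBdeg' (d i) z
    rw [h5, hz]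
    exact DS'.pr_of_mem (hΨfdeg (d i) _ (htBdeg (d i) _ (hc i)))
  choose x hxeq hxdeg using hxex
  have hx'ex : ∀ i : Fin k', ∃ xi : S.E σ,
      S.toBoundary σ xi = Ψb (S'.toBoundary σ (c' i)) ∧ xi ∈ S.deg σ (d' i) := by
    intro i
    obtain ⟨z, hz⟩ := S.toBoundary_surjective hS hfin σ hσ hσ0 (Ψb (S'.toBoundary σ (c' i)))
    refine ⟨(S.gmod σ).pr (d' i) z, ?_, (S.gmod σ).pr_mem _ _⟩
    have h5 : S.toBoundary σ ((S.gmod σ).pr (d' i) z)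
        = DS.pr (d' i) (S.toBoundary σ z) :=
      (S.gmod σ).pr_comm DS (S.toBoundary σ).toAddMonoidHom htBdeg (d' i) z
    rw [h5, hz]
    exact DS.pr_of_mem (hΨbdeg (d' i) _ (htBdeg' (d' i) _ (hc' i)))
  choose x' hx'eq hx'deg using hx'ex
  obtain ⟨f, hf⟩ := exists_lift σ htorE htorE' hcspan hcrel x
  obtain ⟨g, hg⟩ := exists_lift σ htorE' htorE hcspan' hcrel' x'
  have hfdeg := lift_graded σ (S.gmod σ) (S'.gmod σ) htorE' hc hcspan hcrel hxdeg f hf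
  have hgdeg := lift_graded σ (S'.gmod σ) (S.gmod σ) htorE hc' hcspan' hcrel' hx'deg g hg
  have hfcomm : ∀ e, S'.toBoundary σ (f e) = Ψf (S.toBoundary σ e) := by
    have h6 : (S'.toBoundary σ).comp f = Ψf.comp (S.toBoundary σ) := by
      refine LinearMap.ext_on hcspan ?_
      rintro z ⟨i, rfl⟩
      show S'.toBoundary σ (f (c i)) = Ψf (S.toBoundary σ (c i))
      rw [hf i, hxeq i]
    exact fun e => DFunLike.congr_fun h6 e
  have hgcomm : ∀ e, S.toBoundary σ (g e) = Ψb (S'.toBoundary σ e) := by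
    have h6 : (S.toBoundary σ).comp g = Ψb.comp (S'.toBoundary σ) := by
      refine LinearMap.ext_on hcspan' ?_
      rintro z ⟨i, rfl⟩
      show S.toBoundary σ (g (c' i)) = Ψb (S'.toBoundary σ (c' i))
      rw [hg i, hx'eq i]
    exact fun e => DFunLike.congr_fun h6 e
  haveI : Module.Finite (Aring n) (S.E σ) :=
    ⟨⟨(Set.finite_range c).toFinset, by rw [Set.Finite.coe_toFinset]; exact hcspan⟩⟩
  haveI : Module.Finite (Aring n) (S'.E σ) :=
    ⟨⟨(Set.finite_range c').toFinset, by rw [Set.Finite.coe_toFinset]; exact hcspan'⟩⟩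
  -- surjectivity of the two composites via graded Nakayama
  have hcompsur : ∀ (T : GSheaf n Δ) (hT : T.IsMES) (u : T.E σ →ₗ[Aring n] T.E σ),
      (∀ j, ∀ e ∈ T.deg σ j, u e ∈ T.deg σ j) →
      (∀ e, T.toBoundary σ (u e) = T.toBoundary σ e) →
      Function.Surjective u := by
    intro T hT u hudeg hucomm
    set su : Set (T.E σ) := ⋃ j, u '' (T.deg σ j : Set (T.E σ)) with hsu_def
    have hs1 : ∀ z ∈ su, ∃ j, z ∈ T.deg σ j := by
      intro z hz
      rw [hsu_def, Set.mem_iUnion] at hz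
      obtain ⟨j, e, he, rfl⟩ := hz
      exact ⟨j, hudeg j e he⟩
    have hs2 : ∀ e : T.E σ, e ∈ Submodule.span (Aring n) su ⊔
        mIdeal n • (⊤ : Submodule (Aring n) (T.E σ)) := by
      intro e
      have h7 : T.toBoundary σ (u e - e) = 0 := by rw [map_sub, hucomm, sub_self]
      have h8 : u e - e ∈ mIdeal n • (⊤ : Submodule (Aring n) (T.E σ)) :=
        (hT.2.2 σ hσ hσ0).2 _ (by rw [h7]; exact Submodule.zero_mem _)
      have h9 : u e ∈ Submodule.span (Aring n) su := by
        obtain ⟨t, het⟩ := (T.gmod σ).sum_pr e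
        have h10 : u e = ∑ j ∈ t, u ((T.gmod σ).pr j e) := by
          conv_lhs => rw [het]
          rw [map_sum]
        rw [h10]
        exact Submodule.sum_mem _ fun j _ => Submodule.subset_span
          (by rw [hsu_def, Set.mem_iUnion]; exact ⟨j, _, (T.gmod σ).pr_mem j e, rfl⟩)
      exact Submodule.mem_sup.2 ⟨u e, h9, e - u e,
        by simpa using Submodule.neg_mem _ h8, by abel⟩
    have htop := (T.gmod σ).span_eq_top_of_sup su hs1 hs2
    intro y
    have h11 : y ∈ Submodule.span (Aring n) su := by rw [htop]; trivial
    have h12 : Submodule.span (Aring n) su ≤ LinearMap.range u := by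
      rw [Submodule.span_le]
      intro z hz
      rw [hsu_def, Set.mem_iUnion] at hz
      obtain ⟨j, e, _, rfl⟩ := hz
      exact ⟨e, rfl⟩
    exact h12 h11
  have hgfsur : Function.Surjective (g ∘ₗ f) := by
    refine hcompsur S hS (g ∘ₗ f) (fun j e he => hgdeg j _ (hfdeg j e he)) (fun e => ?_)
    show S.toBoundary σ (g (f e)) = S.toBoundary σ e
    rw [hgcomm, hfcomm, hΨbf]
  have hfgsur : Function.Surjective (f ∘ₗ g) := by
    refine hcompsur S' hS' (f ∘ₗ g) (fun j e he => hfdeg j _ (hgdeg j e he)) (fun e => ?_)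
    show S'.toBoundary σ (f (g e)) = S'.toBoundary σ e
    rw [hfcomm, hgcomm, hΨfb]
  have hgfinj : Function.Injective (g ∘ₗ f) :=
    OrzechProperty.injective_of_surjective_endomorphism _ hgfsur
  have hfinj : Function.Injective f := by
    intro e e' hee
    exact hgfinj (by simp only [LinearMap.comp_apply, hee])
  have hfsurj : Function.Surjective f := by
    intro y
    obtain ⟨z, hz⟩ := hfgsur y
    exact ⟨g z, hz⟩
  refine ⟨LinearEquiv.ofBijective f ⟨hfinj, hfsurj⟩, ?_, ?_⟩
  · intro τ hτ xx
    have h13 := hfcomm xx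
    have h14 := congrArg (fun w : S'.Sect (bdry Δ σ) =>
      (w : ∀ τ : bdry Δ σ, S'.E τ) ⟨τ, hτ⟩) h13
    exact h14
  · intro j xx hxx
    exact hfdeg j xx hxx

end Aux5


section Aux6

open MvPolynomial

theorem zero_mem_of_mem_fan (hΔ : IsFan Δ) {σ : Set (Fin n → ℚ)} (hσ : σ ∈ Δ) :
    (0 : Fin n → ℚ) ∈ σ := by
  obtain ⟨m, v, hv⟩ := hΔ.pcone σ hσ
  rw [hv]
  exact ⟨0, fun i => le_refl 0, by simp⟩

theorem zero_iso (S S' : GSheaf n Δ) (hS : S.IsMES) (hS' : S'.IsMES)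
    (h0 : ({0} : Set (Fin n → ℚ)) ∈ Δ) :
    ∃ ψ : S.E ({0} : Set (Fin n → ℚ)) ≃ₗ[Aring n] S'.E ({0} : Set (Fin n → ℚ)),
      ∀ j, ∀ x ∈ S.deg ({0} : Set (Fin n → ℚ)) j,
        ψ x ∈ S'.deg ({0} : Set (Fin n → ℚ)) j := by
  classical
  obtain ⟨e⟩ := hS.1.1
  obtain ⟨e'⟩ := hS'.1.1
  have htor := (hS.2.1 _ h0).1
  have htor' := (hS'.2.1 _ h0).1
  have hsm : ∀ (p : Aring n) (x : S.E ({0} : Set (Fin n → ℚ))),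
      p • x = (constantCoeff p : ℚ) • x := smul_eq_constantCoeff_smul htor
  have hsm' : ∀ (p : Aring n) (x : S'.E ({0} : Set (Fin n → ℚ))),
      p • x = (constantCoeff p : ℚ) • x := smul_eq_constantCoeff_smul htor'
  let φ₀ : S.E ({0} : Set (Fin n → ℚ)) ≃ₗ[ℚ] S'.E ({0} : Set (Fin n → ℚ)) := e.trans e'.symm
  let F : S.E ({0} : Set (Fin n → ℚ)) →ₗ[Aring n] S'.E ({0} : Set (Fin n → ℚ)) :=
    { toFun := φ₀
      map_add' := φ₀.map_add
      map_smul' := fun p y => by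
        simp only [RingHom.id_apply]
        rw [hsm p y, hsm' p (φ₀ y), map_smul] }
  let G : S'.E ({0} : Set (Fin n → ℚ)) →ₗ[Aring n] S.E ({0} : Set (Fin n → ℚ)) :=
    { toFun := φ₀.symm
      map_add' := φ₀.symm.map_add
      map_smul' := fun p y => by
        simp only [RingHom.id_apply]
        rw [hsm' p y, hsm p (φ₀.symm y), map_smul] }
  refine ⟨LinearEquiv.ofLinear F G ?_ ?_, ?_⟩
  · ext y
    show φ₀ (φ₀.symm y) = y
    simp
  · ext y
    show φ₀.symm (φ₀ y) = y
    simp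
  · intro j xx hxx
    by_cases hj : j = 0
    · subst hj
      rw [hS'.1.2]
      trivial
    · have h1 : xx ∈ S.deg ({0} : Set (Fin n → ℚ)) 0 := by rw [hS.1.2]; trivial
      have h2 := (S.gmod ({0} : Set (Fin n → ℚ))).pr_of_mem hxx
      have h3 := (S.gmod ({0} : Set (Fin n → ℚ))).pr_of_ne h1 hj
      rw [h2] at h3
      rw [h3, map_zero]
      exact Submodule.zero_mem _

/-- Transport of a stalkwise isomorphism along an equality of cones. -/
noncomputable def castIso (S S' : GSheaf n Δ) {σ σ' : Set (Fin n → ℚ)} (h : σ = σ')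
    (ψ : S.E σ ≃ₗ[Aring n] S'.E σ) : S.E σ' ≃ₗ[Aring n] S'.E σ' := h ▸ ψ

theorem main_ind (S S' : GSheaf n Δ) (hS : S.IsMES) (hS' : S'.IsMES)
    (hΔ : IsFan Δ) (h0 : ({0} : Set (Fin n → ℚ)) ∈ Δ) :
    ∀ (N : ℕ) (Λ : Set (Set (Fin n → ℚ))), Λ ⊆ Δ →
      (∀ σ' ∈ Λ, ∀ τ ∈ Δ, τ ⊆ σ' → τ ∈ Λ) → Λ.ncard ≤ N →
      ∃ φ : ∀ σ', σ' ∈ Λ → (S.E σ' ≃ₗ[Aring n] S'.E σ'),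
        (∀ σ' (hσ' : σ' ∈ Λ) τ (hτ : τ ∈ Λ) (h : τ ⊆ σ') (x : S.E σ'),
          S'.res σ' τ h (φ σ' hσ' x) = φ τ hτ (S.res σ' τ h x)) ∧
        (∀ σ' (hσ' : σ' ∈ Λ) (j : ℕ), ∀ x ∈ S.deg σ' j, φ σ' hσ' x ∈ S'.deg σ' j) := by
  intro N
  induction N with
  | zero =>
      intro Λ hΛΔ _ hcard
      have hΛfin : Λ.Finite := hΔ.finite.subset hΛΔ
      have hempty : Λ = ∅ := (Set.ncard_eq_zero hΛfin).1 (Nat.le_zero.1 hcard)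
      refine ⟨fun σ' hσ' => absurd hσ' (by rw [hempty]; exact Set.notMem_empty σ'), ?_, ?_⟩
      · intro σ' hσ'
        exact absurd hσ' (by rw [hempty]; exact Set.notMem_empty σ')
      · intro σ' hσ'
        exact absurd hσ' (by rw [hempty]; exact Set.notMem_empty σ')
  | succ N IH =>
      intro Λ hΛΔ hdc hcard
      classical
      have hΛfin : Λ.Finite := hΔ.finite.subset hΛΔ
      rcases Set.eq_empty_or_nonempty Λ with hempty | hne
      · refine ⟨fun σ' hσ' => absurd hσ' (by rw [hempty]; exact Set.notMem_empty σ'), ?_, ?_⟩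
        · intro σ' hσ'
          exact absurd hσ' (by rw [hempty]; exact Set.notMem_empty σ')
        · intro σ' hσ'
          exact absurd hσ' (by rw [hempty]; exact Set.notMem_empty σ')
      · obtain ⟨σ, hσΛ, hmax⟩ : ∃ σ ∈ Λ, ∀ σ' ∈ Λ, σ ⊆ σ' → σ = σ' := by
            obtain ⟨σ, hσ, hm⟩ := Set.Finite.exists_maximalFor id Λ hΛfin hne
            exact ⟨σ, hσ, fun σ' h1 h2 => le_antisymm h2 (hm h1 h2)⟩
        set Λ' : Set (Set (Fin n → ℚ)) := Λ \ {σ} with hΛ'def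
        have hΛ'Δ : Λ' ⊆ Δ := fun τ hτ => hΛΔ hτ.1
        have hdc' : ∀ σ' ∈ Λ', ∀ τ ∈ Δ, τ ⊆ σ' → τ ∈ Λ' := by
          intro σ' hσ' τ hτΔ hτσ'
          refine ⟨hdc σ' hσ'.1 τ hτΔ hτσ', ?_⟩
          intro hτσ
          rw [Set.mem_singleton_iff] at hτσ
          subst hτσ
          have h1 := hmax σ' hσ'.1 hτσ'
          exact hσ'.2 (by rw [Set.mem_singleton_iff]; exact h1.symm)
        have hcard' : Λ'.ncard ≤ N := by
          have h1 : Λ'.ncard = Λ.ncard - 1 := Set.ncard_diff_singleton_of_mem hσΛ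
          have h2 : 0 < Λ.ncard := (Set.ncard_pos hΛfin).2 hne
          omega
        obtain ⟨φ', hφ'res, hφ'deg⟩ := IH Λ' hΛ'Δ hdc' hcard'
        have hbd : ∀ τ, τ ∈ bdry Δ σ → τ ∈ Λ' := by
          intro τ hτ
          refine ⟨hdc σ hσΛ τ hτ.1 hτ.2.1, ?_⟩
          simpa using hτ.2.2
        have hψ : ∃ ψ : S.E σ ≃ₗ[Aring n] S'.E σ,
            (∀ τ (hτ : τ ∈ bdry Δ σ) (x : S.E σ),
              S'.res σ τ hτ.2.1 (ψ x) = φ' τ (hbd τ hτ) (S.res σ τ hτ.2.1 x)) ∧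
            (∀ j, ∀ x ∈ S.deg σ j, ψ x ∈ S'.deg σ j) := by
          by_cases hσ0 : σ = ({0} : Set (Fin n → ℚ))
          · subst hσ0
            obtain ⟨ψ, hψdeg⟩ := zero_iso S S' hS hS' h0
            refine ⟨ψ, ?_, hψdeg⟩
            intro τ hτ xx
            exfalso
            have h1 : (0 : Fin n → ℚ) ∈ τ := zero_mem_of_mem_fan hΔ hτ.1
            have h2 : τ = ({0} : Set (Fin n → ℚ)) :=
              Set.Subset.antisymm hτ.2.1 (Set.singleton_subset_iff.2 h1)
            exact hτ.2.2 h2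
          · exact extend_iso S S' hS hS' hΔ.finite σ (hΛΔ hσΛ) hσ0
              (fun τ hτ => φ' τ (hbd τ hτ))
              (fun τ hτ υ hυ h x => hφ'res τ (hbd τ hτ) υ (hbd υ hυ) h x)
              (fun τ hτ j x hx => hφ'deg τ (hbd τ hτ) j x hx)
        obtain ⟨ψ, hψres, hψdeg⟩ := hψ
        refine ⟨fun σ' hσ' =>
          if h : σ' = σ then castIso S S' h.symm ψ else φ' σ' ⟨hσ', h⟩, ?_, ?_⟩
        · intro σ'' hσ'' τ hτ h x
          simp only []
          by_cases h1 : σ'' = σ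
          · subst h1
            rw [dif_pos rfl]
            by_cases h2 : τ = σ''
            · subst h2
              rw [dif_pos rfl]
              have hr := S.res_self τ h
              have hr' := S'.res_self τ h
              rw [hr, hr']
              rfl
            · rw [dif_neg h2]
              have hτb : τ ∈ bdry Δ σ'' := ⟨hΛΔ hτ, h, h2⟩
              exact hψres τ hτb x
          · by_cases h2 : τ = σ
            · exfalso
              subst h2
              have h3 := hmax σ'' hσ'' h
              exact h1 h3.symm
            · rw [dif_neg h1, dif_neg h2]
              exact hφ'res σ'' ⟨hσ'', h1⟩ τ ⟨hτ, h2⟩ h x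
        · intro σ'' hσ'' j x hx
          simp only []
          by_cases h1 : σ'' = σ
          · subst h1
            rw [dif_pos rfl]
            exact hψdeg j x hx
          · rw [dif_neg h1]
            exact hφ'deg σ'' ⟨hσ'', h1⟩ j x hx

end Aux6

/-- Any two minimal extension sheaves on the same fan `Δ` are isomorphic as
sheaves of graded `𝒜`-modules: there are `A`-linear isomorphisms of the stalks
commuting with the restriction maps and preserving the gradings. -/
theorem stmt_13 (n : ℕ) (Δ : Set (Set (Fin n → ℚ))) (hΔ : IsFan Δ)
    (h0 : ({0} : Set (Fin n → ℚ)) ∈ Δ)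
    (S S' : GSheaf n Δ) (hS : S.IsMES) (hS' : S'.IsMES) :
    ∃ φ : ∀ σ, σ ∈ Δ → (S.E σ ≃ₗ[Aring n] S'.E σ),
      (∀ σ (hσ : σ ∈ Δ) τ (hτ : τ ∈ Δ) (h : τ ⊆ σ) (x : S.E σ),
        S'.res σ τ h (φ σ hσ x) = φ τ hτ (S.res σ τ h x)) ∧
      (∀ σ (hσ : σ ∈ Δ) (d : ℕ), ∀ x ∈ S.deg σ d, φ σ hσ x ∈ S'.deg σ d) := by
  obtain ⟨φ, hres, hdeg⟩ := main_ind S S' hS hS' hΔ h0 Δ.ncard Δ (subset_refl _)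
    (fun σ' _ τ hτ _ => hτ) le_rfl
  exact ⟨φ, hres, hdeg⟩
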